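/- (Key quadratic-form bound, from the proof of Theorem 3.1.) Under the Dantzig-selector hypotheses, with h := θ₀ − θ̂, K₂ := (8/ν)‖θ₀‖₁ and K₃ := 4‖θ₀‖₁², one has hᵀ J h ≤ K₂ γ + K₃ ε, where ε := max_{i,j} |(V(θ₀) − J)_{ij}|. -/

import Mathlib

open Finset

/-- ℓ₁ norm on `Fin p → ℝ`. -/
noncomputable def l1 {p : ℕ} (v : Fin p → ℝ) : ℝ := ∑ i, |v i|

/-- ℓ₁ norm of the subvector indexed by `T`. -/
noncomputable def l1on {p : ℕ} (T : Finset (Fin p)) (v : Fin p → ℝ) : ℝ := ∑ i ∈ T, |v i|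

/-- ℓ₂ norm on `Fin p → ℝ`. -/
noncomputable def l2 {p : ℕ} (v : Fin p → ℝ) : ℝ := Real.sqrt (∑ i, (v i) ^ 2)

/-- ℓ_∞ norm on `Fin p → ℝ`. -/
noncomputable def linf {p : ℕ} (v : Fin p → ℝ) : ℝ := ⨆ i, |v i|

/-- ℓ_q norm on `Fin p → ℝ` for real `q ≥ 1`. -/
noncomputable def lqnorm {p : ℕ} (q : ℝ) (v : Fin p → ℝ) : ℝ := (∑ i, |v i| ^ q) ^ (1 / q)

/-- Quadratic form `hᵀ J h`. -/
noncomputable def quadForm {p : ℕ} (J : Matrix (Fin p) (Fin p) ℝ) (h : Fin p → ℝ) : ℝ :=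
  ∑ i, ∑ j, h i * J i j * h j

/-- The cone `C_T = {h : ‖h_{Tᶜ}‖₁ ≤ ‖h_T‖₁}`. -/
def cone {p : ℕ} (T : Finset (Fin p)) : Set (Fin p → ℝ) := {h | l1on Tᶜ h ≤ l1on T h}

/-- Compatibility factor `κ(T; J)`. -/
noncomputable def kappa {p : ℕ} (T : Finset (Fin p)) (J : Matrix (Fin p) (Fin p) ℝ) : ℝ :=
  sInf {r | ∃ h : Fin p → ℝ, h ≠ 0 ∧ h ∈ cone T ∧
    r = Real.sqrt T.card * Real.sqrt (quadForm J h) / l1on T h}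

/-- Restricted eigenvalue `RE(T; J)`. -/
noncomputable def RE {p : ℕ} (T : Finset (Fin p)) (J : Matrix (Fin p) (Fin p) ℝ) : ℝ :=
  sInf {r | ∃ h : Fin p → ℝ, h ≠ 0 ∧ h ∈ cone T ∧
    r = Real.sqrt (quadForm J h) / l2 h}

/-- Weak cone invertibility factor at `q = ∞`, `F_∞(T; J)`. -/
noncomputable def Finf {p : ℕ} (T : Finset (Fin p)) (J : Matrix (Fin p) (Fin p) ℝ) : ℝ :=
  sInf {r | ∃ h : Fin p → ℝ, h ≠ 0 ∧ h ∈ cone T ∧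
    r = Real.sqrt (quadForm J h) / linf h}

/-- Weak cone invertibility factor `F_q(T; J)` for `q ∈ [1,∞)`
(with the quadratic form without square root, as in the paper's proofs). -/
noncomputable def Fq {p : ℕ} (q : ℝ) (T : Finset (Fin p)) (J : Matrix (Fin p) (Fin p) ℝ) : ℝ :=
  sInf {r | ∃ h : Fin p → ℝ, h ≠ 0 ∧ h ∈ cone T ∧
    r = (T.card : ℝ) ^ (1 / q) * quadForm J h / (l1on T h * lqnorm q h)}

/-- `g(x) = (e^{2x} - 1)/x` for `x ≠ 0`, `g(0) = 2`. -/
noncomputable def g (x : ℝ) : ℝ := if x = 0 then 2 else (Real.exp (2 * x) - 1) / x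

/-- Gradient of the log-quasi-likelihood (divided by `n`), with `b = 0`, `Δ = 1/n`:
`ψ(θ)_i = (1/(nΔ)) Σ_k z_{k,i}(e^{-2⟨θ,z_k⟩}(x_k - x_{k-1})² - Δ)`. -/
noncomputable def psiD {n p : ℕ} (x : Fin (n + 1) → ℝ) (z : Fin n → Fin p → ℝ)
    (θ : Fin p → ℝ) (i : Fin p) : ℝ :=
  (1 / ((n : ℝ) * (1 / n))) * ∑ k, z k i *
    (Real.exp (-2 * ∑ j, θ j * z k j) * (x k.succ - x k.castSucc) ^ 2 - 1 / n)

/-- Negative Hessian (divided by `n`):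
`V(θ) = (2/(nΔ)) Σ_k e^{-2⟨θ,z_k⟩}(x_k - x_{k-1})² z_k z_kᵀ`. -/
noncomputable def VD {n p : ℕ} (x : Fin (n + 1) → ℝ) (z : Fin n → Fin p → ℝ)
    (θ : Fin p → ℝ) : Matrix (Fin p) (Fin p) ℝ := fun i j =>
  (2 / ((n : ℝ) * (1 / n))) * ∑ k, Real.exp (-2 * ∑ l, θ l * z k l) *
    (x k.succ - x k.castSucc) ^ 2 * z k i * z k j

/-- `J = (2/n) Σ_k z_k z_kᵀ`. -/
noncomputable def JD {n p : ℕ} (z : Fin n → Fin p → ℝ) : Matrix (Fin p) (Fin p) ℝ :=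
  fun i j => (2 / (n : ℝ)) * ∑ k, z k i * z k j

/-- `ε = max_{i,j} |(V(θ) - J)_{ij}|`. -/
noncomputable def epsD {n p : ℕ} (x : Fin (n + 1) → ℝ) (z : Fin n → Fin p → ℝ)
    (θ : Fin p → ℝ) : ℝ :=
  ⨆ i, ⨆ j, |VD x z θ i j - JD z i j|

/-!
Write `h = θ₀ - θ̂`, `a_k = ⟨h, z_k⟩` and `E_k = e^{-2⟨θ₀,z_k⟩}(x_k - x_{k-1})² ≥ 0`. Then
`⟨h, ψ(θ̂) - ψ(θ₀)⟩ = Σ_k E_k a_k (e^{2a_k} - 1) = Σ_k E_k a_k² g(a_k)` while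
`hᵀ V(θ₀) h = 2 Σ_k E_k a_k²`. As `‖h‖₁ ≤ 2‖θ₀‖₁`, every `a_k` lies in `I`, so `g(a_k) ≥ ν` and
`ν hᵀ V(θ₀) h ≤ 2⟨h, ψ(θ̂) - ψ(θ₀)⟩ ≤ 4γ‖h‖₁ ≤ 8γ‖θ₀‖₁`. Finally
`hᵀ (J - V(θ₀)) h ≤ ε ‖h‖₁² ≤ 4‖θ₀‖₁² ε`.
-/

open Matrix

section Norms

variable {p : ℕ}

lemma l1_nonneg (v : Fin p → ℝ) : 0 ≤ l1 v :=
  Finset.sum_nonneg fun _ _ => abs_nonneg _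

lemma l1_sub_le (u v : Fin p → ℝ) : l1 (u - v) ≤ l1 u + l1 v := by
  unfold l1
  rw [← Finset.sum_add_distrib]
  exact Finset.sum_le_sum fun i _ => abs_sub (u i) (v i)

lemma linf_nonneg (v : Fin p → ℝ) : 0 ≤ linf v :=
  Real.iSup_nonneg fun _ => abs_nonneg _

lemma abs_le_linf (v : Fin p → ℝ) (i : Fin p) : |v i| ≤ linf v :=
  le_ciSup (f := fun i => |v i|) (Finite.bddAbove_range _) i

lemma abs_dotProduct_le_l1_mul {u v : Fin p → ℝ} {M : ℝ} (hv : ∀ i, |v i| ≤ M) :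
    |u ⬝ᵥ v| ≤ l1 u * M :=
  calc |u ⬝ᵥ v| ≤ ∑ i, |u i * v i| := Finset.abs_sum_le_sum_abs _ _
    _ ≤ ∑ i, |u i| * M := Finset.sum_le_sum fun i _ => by
        rw [abs_mul]; exact mul_le_mul_of_nonneg_left (hv i) (abs_nonneg _)
    _ = l1 u * M := (Finset.sum_mul ..).symm

end Norms

section QuadForm

variable {p : ℕ}

lemma quadForm_sub (A B : Matrix (Fin p) (Fin p) ℝ) (h : Fin p → ℝ) :
    quadForm (A - B) h = quadForm A h - quadForm B h := by
  simp only [quadForm, Matrix.sub_apply, mul_sub, sub_mul, Finset.sum_sub_distrib]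

lemma quadForm_le_mul_l1_sq {A : Matrix (Fin p) (Fin p) ℝ} {M : ℝ} (hA : ∀ i j, |A i j| ≤ M)
    (h : Fin p → ℝ) : quadForm A h ≤ M * l1 h ^ 2 :=
  calc quadForm A h ≤ ∑ i, ∑ j, |h i| * M * |h j| :=
        Finset.sum_le_sum fun i _ => Finset.sum_le_sum fun j _ =>
          calc h i * A i j * h j ≤ |h i * A i j * h j| := le_abs_self _
            _ = |h i| * |A i j| * |h j| := by rw [abs_mul, abs_mul]
            _ ≤ |h i| * M * |h j| := by gcongr; exact hA i j
    _ = M * l1 h ^ 2 := by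
        rw [l1, sq, Finset.sum_mul_sum, Finset.mul_sum]
        exact Finset.sum_congr rfl fun i _ => by rw [Finset.mul_sum]; ring_nf

lemma quadForm_weighted_gram {n : ℕ} (c : ℝ) (w : Fin n → ℝ) (z : Fin n → Fin p → ℝ)
    (h : Fin p → ℝ) :
    quadForm (fun i j => c * ∑ k, w k * z k i * z k j) h = c * ∑ k, w k * (h ⬝ᵥ z k) ^ 2 := by
  simp only [quadForm, dotProduct, sq, Finset.mul_sum, Finset.sum_mul]
  rw [Finset.sum_comm_cycle]
  exact Finset.sum_congr rfl fun _ _ => Finset.sum_congr rfl fun _ _ =>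
    Finset.sum_congr rfl fun _ _ => by ring

end QuadForm

lemma mul_exp_two_mul_sub_one (a : ℝ) : a * (Real.exp (2 * a) - 1) = g a * a ^ 2 := by
  unfold g
  split_ifs with ha
  · simp [ha]
  · field_simp

lemma g_pos (a : ℝ) : 0 < g a := by
  unfold g
  split_ifs with ha
  · norm_num
  rcases lt_or_gt_of_ne ha with ha | ha
  · refine div_pos_of_neg_of_neg ?_ ha
    linarith [Real.exp_lt_one_iff.mpr (by linarith : 2 * a < 0)]
  · refine div_pos ?_ ha
    linarith [Real.one_lt_exp_iff.mpr (by linarith : 0 < 2 * a)]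

section Model

variable {n p : ℕ} (x : Fin (n + 1) → ℝ) (z : Fin n → Fin p → ℝ)

noncomputable def normSqIncr (θ : Fin p → ℝ) (k : Fin n) : ℝ :=
  Real.exp (-2 * (θ ⬝ᵥ z k)) * (x k.succ - x k.castSucc) ^ 2

lemma normSqIncr_nonneg (θ : Fin p → ℝ) (k : Fin n) : 0 ≤ normSqIncr x z θ k :=
  mul_nonneg (Real.exp_pos _).le (sq_nonneg _)

lemma quadForm_VD (θ h : Fin p → ℝ) :
    quadForm (VD x z θ) h = 2 / ((n : ℝ) * (1 / n)) * ∑ k, normSqIncr x z θ k * (h ⬝ᵥ z k) ^ 2 :=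
  quadForm_weighted_gram _ _ z h

lemma psiD_sub_psiD (θ θ' : Fin p → ℝ) (i : Fin p) :
    psiD x z θ' i - psiD x z θ i = 1 / ((n : ℝ) * (1 / n)) *
      ∑ k, z k i * (normSqIncr x z θ k * (Real.exp (2 * ((θ - θ') ⬝ᵥ z k)) - 1)) := by
  rw [psiD, psiD, ← mul_sub, ← Finset.sum_sub_distrib]
  congr 1
  refine Finset.sum_congr rfl fun k _ => ?_
  simp only [← dotProduct.eq_1]
  have hexp : Real.exp (-2 * (θ' ⬝ᵥ z k)) =
      Real.exp (-2 * (θ ⬝ᵥ z k)) * Real.exp (2 * ((θ - θ') ⬝ᵥ z k)) := by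
    rw [← Real.exp_add, sub_dotProduct]; ring_nf
  rw [hexp, normSqIncr]
  ring

lemma dotProduct_psiD_sub (θ θ' : Fin p → ℝ) :
    (θ - θ') ⬝ᵥ (psiD x z θ' - psiD x z θ) = 1 / ((n : ℝ) * (1 / n)) *
      ∑ k, ((θ - θ') ⬝ᵥ z k) * (normSqIncr x z θ k * (Real.exp (2 * ((θ - θ') ⬝ᵥ z k)) - 1)) := by
  have hswap (u : Fin p → ℝ) (c : ℝ) (F : Fin n → ℝ) :
      ∑ i, u i * (c * ∑ k, z k i * F k) = c * ∑ k, (u ⬝ᵥ z k) * F k := by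
    simp only [dotProduct, Finset.mul_sum, Finset.sum_mul]
    rw [Finset.sum_comm]
    exact Finset.sum_congr rfl fun _ _ => Finset.sum_congr rfl fun _ _ => by ring
  change ∑ i, (θ - θ') i * (psiD x z θ' i - psiD x z θ i) = _
  simp only [psiD_sub_psiD]
  exact hswap _ _ _

lemma quadForm_VD_le_dotProduct_psiD_sub {ν : ℝ} (θ θ' : Fin p → ℝ)
    (hg : ∀ k, ν ≤ g ((θ - θ') ⬝ᵥ z k)) :
    ν * quadForm (VD x z θ) (θ - θ') ≤ 2 * ((θ - θ') ⬝ᵥ (psiD x z θ' - psiD x z θ)) := by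
  rw [quadForm_VD, dotProduct_psiD_sub]
  set c : ℝ := 1 / ((n : ℝ) * (1 / n))
  have hc : 0 ≤ c := by positivity
  calc ν * (2 / ((n : ℝ) * (1 / n)) * ∑ k, normSqIncr x z θ k * ((θ - θ') ⬝ᵥ z k) ^ 2)
      = 2 * (c * ∑ k, ν * (normSqIncr x z θ k * ((θ - θ') ⬝ᵥ z k) ^ 2)) := by
        rw [← Finset.mul_sum]; ring
    _ ≤ _ := by
        refine mul_le_mul_of_nonneg_left (mul_le_mul_of_nonneg_left
          (Finset.sum_le_sum fun k _ => ?_) hc) zero_le_two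
        set a := (θ - θ') ⬝ᵥ z k
        set E := normSqIncr x z θ k
        calc ν * (E * a ^ 2) ≤ g a * (E * a ^ 2) := mul_le_mul_of_nonneg_right (hg k)
              (mul_nonneg (normSqIncr_nonneg x z θ k) (sq_nonneg a))
          _ = a * (E * (Real.exp (2 * a) - 1)) := by
              linear_combination -E * mul_exp_two_mul_sub_one a

lemma epsD_nonneg (θ : Fin p → ℝ) : 0 ≤ epsD x z θ :=
  Real.iSup_nonneg fun _ => Real.iSup_nonneg fun _ => abs_nonneg _

lemma abs_JD_sub_VD_le_epsD (θ : Fin p → ℝ) (i j : Fin p) :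
    |(JD z - VD x z θ) i j| ≤ epsD x z θ := by
  rw [Matrix.sub_apply, abs_sub_comm]
  exact (le_ciSup (f := fun j => |VD x z θ i j - JD z i j|) (Finite.bddAbove_range _) j).trans
    (le_ciSup (f := fun i => ⨆ j, |VD x z θ i j - JD z i j|) (Finite.bddAbove_range _) i)

end Model

theorem quadratic_form_bound_general
    (n p : ℕ)
    (C : ℝ) (hC : 0 < C)
    (x : Fin (n + 1) → ℝ) (z : Fin n → Fin p → ℝ)
    (hz : ∀ k i, |z k i| ≤ C)
    (θ₀ θhat : Fin p → ℝ)
    (ν : ℝ) (hν : IsLeast (g '' Set.Icc (-(2 * C * l1 θ₀)) (2 * C * l1 θ₀)) ν)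
    (γ : ℝ)
    (hfeas : linf (psiD x z θhat) ≤ γ)
    (hmin : l1 θhat ≤ l1 θ₀)
    (htrue : linf (psiD x z θ₀) ≤ γ) :
    quadForm (JD z) (θ₀ - θhat) ≤
      8 / ν * l1 θ₀ * γ + 4 * l1 θ₀ ^ 2 * epsD x z θ₀ := by
  set h := θ₀ - θhat
  have hh : l1 h ≤ 2 * l1 θ₀ := by linarith [l1_sub_le θ₀ θhat]
  have hν₀ : 0 < ν := by
    obtain ⟨a, -, rfl⟩ := hν.1
    exact g_pos a
  have hg (k : Fin n) : ν ≤ g (h ⬝ᵥ z k) := by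
    refine hν.2 ⟨_, abs_le.mp ((abs_dotProduct_le_l1_mul (hz k)).trans ?_), rfl⟩
    nlinarith
  have hψ : h ⬝ᵥ (psiD x z θhat - psiD x z θ₀) ≤ l1 h * (2 * γ) :=
    (le_abs_self _).trans <| abs_dotProduct_le_l1_mul fun i => (abs_sub _ _).trans <| by
      linarith [abs_le_linf (psiD x z θhat) i, abs_le_linf (psiD x z θ₀) i]
  have hV : quadForm (VD x z θ₀) h ≤ 8 / ν * l1 θ₀ * γ := by
    have hγ : 0 ≤ γ := (linf_nonneg _).trans htrue
    rw [div_mul_eq_mul_div, div_mul_eq_mul_div, le_div_iff₀ hν₀]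
    calc quadForm (VD x z θ₀) h * ν ≤ 2 * (l1 h * (2 * γ)) := by
          linarith [quadForm_VD_le_dotProduct_psiD_sub x z θ₀ θhat hg]
      _ ≤ 8 * l1 θ₀ * γ := by nlinarith
  have hJV : quadForm (JD z) h - quadForm (VD x z θ₀) h ≤ epsD x z θ₀ * l1 h ^ 2 := by
    rw [← quadForm_sub]
    exact quadForm_le_mul_l1_sq (abs_JD_sub_VD_le_epsD x z θ₀) h
  have hε : epsD x z θ₀ * l1 h ^ 2 ≤ epsD x z θ₀ * (2 * l1 θ₀) ^ 2 :=
    mul_le_mul_of_nonneg_left (pow_le_pow_left₀ (l1_nonneg h) hh 2) (epsD_nonneg x z θ₀)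
  linarith

/-- Key quadratic-form bound (from the proof of Theorem 3.1): with `h := θ₀ - θ̂`,
`K₂ := (8/ν)‖θ₀‖₁` and `K₃ := 4‖θ₀‖₁²`, one has `hᵀ J h ≤ K₂ γ + K₃ ε`,
where `ε := max_{i,j} |(V(θ₀) - J)_{ij}|`. -/
theorem quadratic_form_bound
    (n p : ℕ) (hn : 0 < n) (hp : 0 < p)
    (C : ℝ) (hC : 0 < C)
    (x : Fin (n + 1) → ℝ) (z : Fin n → Fin p → ℝ)
    (hz : ∀ k i, |z k i| ≤ C)
    (θ₀ θhat : Fin p → ℝ)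
    (ν : ℝ) (hν : IsLeast (g '' Set.Icc (-(2 * C * l1 θ₀)) (2 * C * l1 θ₀)) ν)
    (γ : ℝ) (hγ : 0 < γ)
    (hfeas : linf (psiD x z θhat) ≤ γ)
    (hmin : l1 θhat ≤ l1 θ₀)
    (htrue : linf (psiD x z θ₀) ≤ γ) :
    quadForm (JD z) (θ₀ - θhat) ≤
      8 / ν * l1 θ₀ * γ + 4 * l1 θ₀ ^ 2 * epsD x z θ₀ :=
  quadratic_form_bound_general n p C hC x z hz θ₀ θhat ν hν γ hfeas hmin htrue
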